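/- Every uniformly pyramidal polytope in a finite-dimensional real vector space is a simplex. -/

import Mathlib

open Set

/-- The dimension of a subset `S` of a real vector space: `d` where `d+1` is the maximal
number of affinely independent points in `S` (so `dim ∅ = -1`). -/
noncomputable def setDim {V : Type*} [AddCommGroup V] [Module ℝ V] (S : Set V) : ℤ :=
  ((sSup {n : ℕ | ∃ p : Fin n → V, (∀ i, p i ∈ S) ∧ AffineIndependent ℝ p} : ℕ) : ℤ) - 1

/-- A face of a convex set `C`: a nonempty convex subset `F ⊆ C` such that whenever
`x, y ∈ C`, `0 < λ < 1` and `λ•x + (1-λ)•y ∈ F`, then `x, y ∈ F`. -/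
def IsFaceOf {V : Type*} [AddCommGroup V] [Module ℝ V] (F C : Set V) : Prop :=
  F.Nonempty ∧ Convex ℝ F ∧ F ⊆ C ∧
    ∀ x ∈ C, ∀ y ∈ C, ∀ l : ℝ, 0 < l → l < 1 → l • x + (1 - l) • y ∈ F → x ∈ F ∧ y ∈ F

/-- A minus-face of a convex set `C` is a face of dimension `dim C - 1`. -/
def IsMinusFace {V : Type*} [AddCommGroup V] [Module ℝ V] (F C : Set V) : Prop :=
  IsFaceOf F C ∧ setDim F = setDim C - 1

/-- A polytope: the convex hull of finitely many points. -/
def IsPolytope {V : Type*} [AddCommGroup V] [Module ℝ V] (S : Set V) : Prop :=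
  ∃ t : Finset V, S = convexHull ℝ (t : Set V)

/-- A simplex: the convex hull of finitely many affinely independent points. -/
def IsSimplex {V : Type*} [AddCommGroup V] [Module ℝ V] (S : Set V) : Prop :=
  ∃ t : Finset V, AffineIndependent ℝ ((↑) : ↥(t : Set V) → V) ∧ S = convexHull ℝ (t : Set V)

/-- An abstract state space `(A, A₊, u)`: `A₊` is a closed generating cone in the
finite-dimensional real vector space `A`, and `u` is a linear functional which is strictly
positive on `A₊ \ {0}`. -/
structure IsAbstractStateSpace {A : Type*} [NormedAddCommGroup A] [NormedSpace ℝ A]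
    [FiniteDimensional ℝ A] (Apos : Set A) (u : A →ₗ[ℝ] ℝ) : Prop where
  closed : IsClosed Apos
  add_mem : ∀ x ∈ Apos, ∀ y ∈ Apos, x + y ∈ Apos
  smul_mem : ∀ (a : ℝ), 0 ≤ a → ∀ x ∈ Apos, a • x ∈ Apos
  pointed : ∀ x, x ∈ Apos → -x ∈ Apos → x = 0
  generating : ∀ x : A, ∃ y ∈ Apos, ∃ z ∈ Apos, x = y - z
  unit_pos : ∀ x ∈ Apos, x ≠ 0 → 0 < u x

/-- The set of normalized states `Ω_A`. -/
def States {A : Type*} [NormedAddCommGroup A] [NormedSpace ℝ A]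
    (Apos : Set A) (u : A →ₗ[ℝ] ℝ) : Set A :=
  {ω ∈ Apos | u ω = 1}

/-- The set of effects `E_A`: linear functionals taking values in `[0,1]` on all states. -/
def Effects {A : Type*} [NormedAddCommGroup A] [NormedSpace ℝ A]
    (Apos : Set A) (u : A →ₗ[ℝ] ℝ) : Set (Module.Dual ℝ A) :=
  {f | ∀ ω ∈ States Apos u, 0 ≤ f ω ∧ f ω ≤ 1}

/-- A pure effect is an extreme point of the convex set of effects. -/
def IsPureEffect {A : Type*} [NormedAddCommGroup A] [NormedSpace ℝ A]
    (Apos : Set A) (u : A →ₗ[ℝ] ℝ) (f : Module.Dual ℝ A) : Prop :=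
  f ∈ Set.extremePoints ℝ (Effects Apos u)

/-- The certain face `F_f = {ω ∈ Ω_A | f(ω) = 1}` of an effect `f`. -/
def certainFace {A : Type*} [NormedAddCommGroup A] [NormedSpace ℝ A]
    (Apos : Set A) (u : A →ₗ[ℝ] ℝ) (f : Module.Dual ℝ A) : Set A :=
  {ω ∈ States Apos u | f ω = 1}

/-- The impossible face `F̄_f = {ω ∈ Ω_A | f(ω) = 0}` of an effect `f`. -/
def impossibleFace {A : Type*} [NormedAddCommGroup A] [NormedSpace ℝ A]
    (Apos : Set A) (u : A →ₗ[ℝ] ℝ) (f : Module.Dual ℝ A) : Set A :=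
  {ω ∈ States Apos u | f ω = 0}

/-- A transformation: a positive linear map such that `u(T ω) ≤ 1` for all states `ω`. -/
def IsTransformation {A : Type*} [NormedAddCommGroup A] [NormedSpace ℝ A]
    (Apos : Set A) (u : A →ₗ[ℝ] ℝ) (T : A →ₗ[ℝ] A) : Prop :=
  (∀ x ∈ Apos, T x ∈ Apos) ∧ ∀ ω ∈ States Apos u, u (T ω) ≤ 1

section Helpers
open Module
variable {V : Type*} [AddCommGroup V] [Module ℝ V] [FiniteDimensional ℝ V]

lemma exists_dual_funct (U : Submodule ℝ V) {v : V} (hv : v ∉ U) :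
    ∃ g : V →ₗ[ℝ] ℝ, (∀ u ∈ U, g u = 0) ∧ g v = 1 := by
  have hq : U.mkQ v ≠ 0 := by
    simp only [Submodule.mkQ_apply, ne_eq, Submodule.Quotient.mk_eq_zero]; exact hv
  obtain ⟨C, hC⟩ := (Submodule.span ℝ {U.mkQ v}).exists_isCompl
  let e := LinearEquiv.toSpanNonzeroSingleton ℝ _ (U.mkQ v) hq
  refine ⟨(e.symm.toLinearMap ∘ₗ Submodule.linearProjOfIsCompl _ C hC) ∘ₗ U.mkQ, ?_, ?_⟩
  · intro u hu
    have h0 : U.mkQ u = 0 := by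
      simp only [Submodule.mkQ_apply, Submodule.Quotient.mk_eq_zero]; exact hu
    simp [h0]
  · have h1 : (Submodule.linearProjOfIsCompl _ C hC) (U.mkQ v)
        = ⟨U.mkQ v, Submodule.mem_span_singleton_self _⟩ :=
      Submodule.linearProjOfIsCompl_apply_left hC ⟨U.mkQ v, Submodule.mem_span_singleton_self _⟩
    have h2 : e 1 = ⟨U.mkQ v, Submodule.mem_span_singleton_self _⟩ := by
      ext; exact congrArg Subtype.val (LinearEquiv.toSpanNonzeroSingleton_one ℝ _ (U.mkQ v) hq)
    simp only [LinearMap.coe_comp, Function.comp_apply, h1, LinearEquiv.coe_coe]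
    rw [← h2, LinearEquiv.symm_apply_apply]

lemma vectorSpan_le_ker {S : Set V} {f : V →ₗ[ℝ] ℝ}
    (h : ∀ x ∈ S, ∀ y ∈ S, f x = f y) : vectorSpan ℝ S ≤ LinearMap.ker f := by
  rw [vectorSpan_def]
  refine Submodule.span_le.2 ?_
  rintro w hw
  rw [Set.mem_vsub] at hw
  obtain ⟨x, hx, y, hy, rfl⟩ := hw
  simp [vsub_eq_sub, map_sub, h x hx y hy]

lemma exists_ne_on {S : Set V} {f : V →ₗ[ℝ] ℝ}
    (h : ¬ (vectorSpan ℝ S ≤ LinearMap.ker f)) : ∃ x ∈ S, ∃ y ∈ S, f x ≠ f y := by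
  by_contra hc
  push_neg at hc
  exact h (vectorSpan_le_ker hc)

lemma vectorSpan_convexHull (s : Set V) :
    vectorSpan ℝ (convexHull ℝ s) = vectorSpan ℝ s := by
  rw [← direction_affineSpan, affineSpan_convexHull, direction_affineSpan]

/-- In a nonempty set there is an affinely independent finset spanning the same affine span,
of cardinality `finrank (vectorSpan S) + 1`. -/
lemma exists_affineIndependent_card {S : Set V} (hS : S.Nonempty) :
    ∃ s : Finset V, ↑s ⊆ S ∧ affineSpan ℝ (s : Set V) = affineSpan ℝ S ∧
      AffineIndependent ℝ ((↑) : ↥(s : Set V) → V) ∧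
      s.card = finrank ℝ (vectorSpan ℝ S) + 1 := by
  obtain ⟨s, hsub, hspan, hind⟩ := exists_affineIndependent ℝ V S
  have hfin : s.Finite := finite_set_of_fin_dim_affineIndependent ℝ hind
  have hsne : s.Nonempty := by
    rcases Set.eq_empty_or_nonempty s with rfl | h
    · exfalso
      obtain ⟨x, hx⟩ := hS
      have : x ∈ affineSpan ℝ S := mem_affineSpan ℝ hx
      rw [← hspan] at this
      exact AffineSubspace.notMem_bot ℝ V x (by simpa using this)
    · exact h
  lift s to Finset V using hfin
  refine ⟨s, hsub, hspan, hind, ?_⟩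
  have hvs : vectorSpan ℝ (s : Set V) = vectorSpan ℝ S := by
    rw [← direction_affineSpan, hspan, direction_affineSpan]
  haveI : Nonempty (s : Set V) := hsne.to_subtype
  have hcard : Fintype.card ↥(s : Set V) = (Fintype.card ↥(s : Set V) - 1) + 1 :=
    (Nat.succ_pred_eq_of_pos Fintype.card_pos).symm
  have := hind.finrank_vectorSpan hcard
  rw [Subtype.range_coe, hvs] at this
  have hc2 : Fintype.card ↥(s : Set V) = s.card :=
    (Fintype.card_congr (Equiv.subtypeEquivRight (fun x => Finset.mem_coe))).trans
      (Fintype.card_coe s)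
  omega

lemma setDim_eq_finrank {S : Set V} (hS : S.Nonempty) :
    setDim S = (finrank ℝ (vectorSpan ℝ S) : ℤ) := by
  set D := finrank ℝ (vectorSpan ℝ S) with hD
  set A := {n : ℕ | ∃ p : Fin n → V, (∀ i, p i ∈ S) ∧ AffineIndependent ℝ p} with hA
  have hub : ∀ n ∈ A, n ≤ D + 1 := by
    rintro n ⟨p, hp, hind⟩
    rcases Nat.eq_zero_or_pos n with rfl | hn
    · omega
    · have hcard : Fintype.card (Fin n) = (n - 1) + 1 := by simp; omega
      have hfr := hind.finrank_vectorSpan hcard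
      have hle : vectorSpan ℝ (Set.range p) ≤ vectorSpan ℝ S := by
        apply vectorSpan_mono
        rintro x ⟨i, rfl⟩; exact hp i
      have := Submodule.finrank_mono hle
      omega
  have hmem : D + 1 ∈ A := by
    obtain ⟨s, hsub, hspan, hind, hcard⟩ := exists_affineIndependent_card hS
    have : Fintype.card ↥(s : Set V) = D + 1 := by
      rw [(Fintype.card_congr (Equiv.subtypeEquivRight (fun x => Finset.mem_coe)) :
        Fintype.card ↥(s : Set V) = _), Fintype.card_coe]
      exact hcard
    let e := (Fintype.equivFinOfCardEq this).symm
    refine ⟨fun i => ((e i : V)), fun i => hsub (e i).2, ?_⟩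
    exact hind.comp_embedding e.toEmbedding
  have hbdd : BddAbove A := ⟨D + 1, hub⟩
  have hsup : sSup A = D + 1 :=
    le_antisymm (csSup_le ⟨D + 1, hmem⟩ hub) (le_csSup hbdd hmem)
  rw [setDim, hsup]
  push_cast
  ring

end Helpers

section FaceMachinery
open Finset Module
open scoped Classical

variable {V : Type*} [AddCommGroup V] [Module ℝ V] [FiniteDimensional ℝ V]

lemma le_sup_on_hull (t : Finset V) (ht : t.Nonempty) (f : V →ₗ[ℝ] ℝ)
    {x : V} (hx : x ∈ convexHull ℝ (t : Set V)) : f x ≤ t.sup' ht f := by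
  have h1 : f x ∈ convexHull ℝ (f '' (t : Set V)) := by
    rw [← LinearMap.image_convexHull]; exact ⟨x, hx, rfl⟩
  have h2 : convexHull ℝ (f '' (t : Set V)) ⊆ Set.Iic (t.sup' ht f) := by
    apply convexHull_min ?_ (convex_Iic _)
    rintro y ⟨z, hz, rfl⟩
    exact Finset.le_sup' f (Finset.mem_coe.mp hz)
  exact h2 h1

lemma argmax_hull_eq (t : Finset V) (ht : t.Nonempty) (f : V →ₗ[ℝ] ℝ) :
    {x ∈ convexHull ℝ (t : Set V) | f x = t.sup' ht f} =
      convexHull ℝ ((t.filter (fun x => f x = t.sup' ht f)) : Set V) := by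
  set M := t.sup' ht f with hM
  set s := t.filter (fun x => f x = M) with hs
  apply Set.Subset.antisymm
  · rintro x ⟨hxP, hxM⟩
    rw [Finset.convexHull_eq] at hxP
    obtain ⟨w, hw0, hw1, hwx⟩ := hxP
    have hxsum : x = ∑ y ∈ t, w y • y := by
      rw [← hwx, Finset.centerMass_eq_of_sum_1 _ _ hw1]; rfl
    have hfx : ∑ y ∈ t, w y * (M - f y) = 0 := by
      have : f x = ∑ y ∈ t, w y * f y := by
        rw [hxsum, map_sum]; congr 1; ext y; rw [map_smul]; rfl
      have hsum : ∑ y ∈ t, w y * (M - f y) = M * (∑ y ∈ t, w y) - ∑ y ∈ t, w y * f y := by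
        rw [Finset.mul_sum, ← Finset.sum_sub_distrib]; congr 1; ext y; ring
      rw [hsum, hw1, ← this, hxM]; ring
    have hzero : ∀ y ∈ t, w y * (M - f y) = 0 := by
      refine (Finset.sum_eq_zero_iff_of_nonneg ?_).mp hfx
      intro y hy
      have := le_sup_on_hull t ht f (subset_convexHull ℝ (t : Set V) (Finset.mem_coe.mpr hy))
      have := hw0 y hy
      nlinarith
    have hwz : ∀ y ∈ t, y ∉ s → w y = 0 := by
      intro y hy hys
      rcases mul_eq_zero.mp (hzero y hy) with h | h
      · exact h
      · exfalso; apply hys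
        rw [hs, Finset.mem_filter]
        exact ⟨hy, by linarith [sub_eq_zero.mp h]⟩
    have hsum' : ∑ y ∈ s, w y = 1 := by
      rw [← hw1]
      exact Finset.sum_subset (Finset.filter_subset _ t) (fun y hy hys => hwz y hy hys)
    have hxc : s.centerMass w id = x := by
      rw [Finset.centerMass_eq_of_sum_1 _ _ hsum', hxsum]
      exact Finset.sum_subset (Finset.filter_subset _ t)
        (fun y hy hys => by simp [hwz y hy hys])
    rw [← hxc]
    exact s.centerMass_mem_convexHull (fun y hy => hw0 y (Finset.filter_subset _ t hy))
      (by rw [hsum']; norm_num) (fun y hy => Finset.mem_coe.mpr hy)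
  · intro x hx
    have hsub : (s : Set V) ⊆ (t : Set V) := Finset.coe_subset.mpr (Finset.filter_subset _ t)
    refine ⟨convexHull_mono hsub hx, ?_⟩
    have h1 : f x ∈ convexHull ℝ (f '' (s : Set V)) := by
      rw [← LinearMap.image_convexHull]; exact ⟨x, hx, rfl⟩
    have h2 : convexHull ℝ (f '' (s : Set V)) ⊆ {M} := by
      apply convexHull_min ?_ (convex_singleton _)
      rintro y ⟨z, hz, rfl⟩
      have := (Finset.mem_filter.mp (Finset.mem_coe.mp hz)).2
      simpa using this
    exact h2 h1

lemma argmax_face (t : Finset V) (ht : t.Nonempty) (f : V →ₗ[ℝ] ℝ) :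
    IsFaceOf (convexHull ℝ ((t.filter (fun x => f x = t.sup' ht f)) : Set V))
      (convexHull ℝ (t : Set V)) := by
  set M := t.sup' ht f with hM
  set s := t.filter (fun x => f x = M) with hs
  have heq := argmax_hull_eq t ht f
  refine ⟨?_, convex_convexHull ℝ _, convexHull_mono (Finset.coe_subset.mpr (Finset.filter_subset _ t)), ?_⟩
  · obtain ⟨b, hb, hfb⟩ := Finset.exists_mem_eq_sup' ht f
    exact ⟨b, subset_convexHull ℝ _ (Finset.mem_coe.mpr (Finset.mem_filter.mpr ⟨hb, hfb.symm⟩))⟩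
  · intro x hx y hy l hl0 hl1 hmem
    rw [← heq] at hmem ⊢
    obtain ⟨hP, hfval⟩ := hmem
    have hfx := le_sup_on_hull t ht f hx
    have hfy := le_sup_on_hull t ht f hy
    have hval : l * f x + (1 - l) * f y = M := by
      have hlin : f (l • x + (1 - l) • y) = l * f x + (1 - l) * f y := by
        simp [map_add, map_smul, smul_eq_mul]
      rw [← hlin]; exact hfval
    have hfx' : f x = M := by nlinarith
    have hfy' : f y = M := by nlinarith
    rw [heq]
    constructor
    · rw [← heq]; exact ⟨hx, hfx'⟩
    · rw [← heq]; exact ⟨hy, hfy'⟩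

end FaceMachinery

section Facet
open Finset Module
open scoped Classical

variable {V : Type*} [AddCommGroup V] [Module ℝ V] [FiniteDimensional ℝ V]

/-- Every polytope of dimension `d ≥ 1` has a facet which is itself the hull of a finset. -/
lemma exists_facet (t : Finset V) (ht : t.Nonempty)
    (hd : 1 ≤ finrank ℝ (vectorSpan ℝ (t : Set V))) :
    ∃ s : Finset V, (s : Set V) ⊆ (t : Set V) ∧ s.Nonempty ∧
      IsFaceOf (convexHull ℝ (s : Set V)) (convexHull ℝ (t : Set V)) ∧
      finrank ℝ (vectorSpan ℝ (s : Set V)) + 1 = finrank ℝ (vectorSpan ℝ (t : Set V)) := by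
  set W := vectorSpan ℝ (t : Set V) with hW
  set d := finrank ℝ W with hdd
  -- two distinct points
  have htwo : ∃ x ∈ t, ∃ y ∈ t, x ≠ y := by
    by_contra hc
    push_neg at hc
    obtain ⟨x₁, hx₁⟩ := ht
    have hsub : (t : Set V) ⊆ {x₁} := by
      intro z hz
      simp [hc z (Finset.mem_coe.mp hz) x₁ hx₁]
    have : W ≤ vectorSpan ℝ ({x₁} : Set V) := vectorSpan_mono ℝ hsub
    rw [vectorSpan_singleton] at this
    have h0 := Submodule.finrank_mono this
    simp only [finrank_bot] at h0
    omega
  set K := {k : ℕ | ∃ f : V →ₗ[ℝ] ℝ, (∃ x ∈ t, ∃ y ∈ t, f x ≠ f y) ∧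
      k = finrank ℝ (vectorSpan ℝ ((t.filter (fun x => f x = t.sup' ht f)) : Set V))} with hK
  have hKne : K.Nonempty := by
    obtain ⟨x, hx, y, hy, hxy⟩ := htwo
    have hne : x - y ≠ 0 := sub_ne_zero.mpr hxy
    obtain ⟨f, _, hf1⟩ := exists_dual_funct (⊥ : Submodule ℝ V) (by simpa using hne)
    refine ⟨_, f, ⟨x, hx, y, hy, ?_⟩, rfl⟩
    intro hxyf
    have h0 : f (x - y) = 0 := by rw [map_sub, hxyf, sub_self]
    rw [hf1] at h0
    norm_num at h0
  have hKbdd : BddAbove K := by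
    refine ⟨finrank ℝ V, ?_⟩
    rintro k ⟨f, _, rfl⟩
    exact Submodule.finrank_le _
  have hKmem := Nat.sSup_mem hKne hKbdd
  set k := sSup K with hk
  obtain ⟨f, hfne, hkf⟩ := hKmem
  set M := t.sup' ht f with hM
  set s := t.filter (fun x => f x = M) with hs
  have hsub : (s : Set V) ⊆ (t : Set V) := Finset.coe_subset.mpr (Finset.filter_subset _ t)
  have hsne : s.Nonempty := by
    obtain ⟨b, hb, hfb⟩ := Finset.exists_mem_eq_sup' ht f
    exact ⟨b, Finset.mem_filter.mpr ⟨hb, hfb.symm⟩⟩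
  set U := vectorSpan ℝ (s : Set V) with hU
  have hUker : U ≤ LinearMap.ker f := by
    apply vectorSpan_le_ker
    intro x hx y hy
    rw [(Finset.mem_filter.mp (Finset.mem_coe.mp hx)).2,
      (Finset.mem_filter.mp (Finset.mem_coe.mp hy)).2]
  have hUW : U ≤ W := vectorSpan_mono ℝ hsub
  obtain ⟨x₁, hx₁, y₁, hy₁, hfxy⟩ := hfne
  set w₀ := x₁ - y₁ with hw₀
  have hw₀W : w₀ ∈ W := by
    rw [hw₀, hW, ← vsub_eq_sub]
    exact vsub_mem_vectorSpan ℝ (Finset.mem_coe.mpr hx₁) (Finset.mem_coe.mpr hy₁)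
  have hfw₀ : f w₀ ≠ 0 := by
    rw [hw₀, map_sub]
    exact sub_ne_zero.mpr hfxy
  have hw₀U : w₀ ∉ U := fun h => hfw₀ (hUker h)
  have hw₀ne : w₀ ≠ 0 := fun h => hfw₀ (by rw [h, map_zero])
  -- upper bound : k < d
  have hklt : k < d := by
    have hlt : U < U ⊔ (Submodule.span ℝ {w₀}) := by
      apply lt_of_le_of_ne le_sup_left
      intro hEq
      apply hw₀U
      rw [hEq]
      exact Submodule.mem_sup_right (Submodule.mem_span_singleton_self w₀)
    have hle : U ⊔ (Submodule.span ℝ {w₀}) ≤ W := by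
      apply sup_le hUW
      rw [Submodule.span_le]
      simpa using hw₀W
    calc k = finrank ℝ U := hkf
    _ < finrank ℝ (U ⊔ (Submodule.span ℝ {w₀}) : Submodule ℝ V) :=
        Submodule.finrank_lt_finrank_of_lt hlt
    _ ≤ d := Submodule.finrank_mono hle
  rcases Nat.lt_or_ge k (d - 1) with hklt2 | hge
  swap
  · -- k = d - 1 : done
    refine ⟨s, hsub, hsne, argmax_face t ht f, ?_⟩
    rw [← hkf] at *
    omega
  exfalso
  -- rotation argument
  have hk2 : k + 2 ≤ d := by omega
  -- pick w₁
  have hnotle : ¬ (W ≤ U ⊔ (Submodule.span ℝ {w₀})) := by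
    intro hle
    have h1 : finrank ℝ (Submodule.span ℝ {w₀} : Submodule ℝ V) = 1 :=
      finrank_span_singleton hw₀ne
    have h2 := Submodule.finrank_sup_add_finrank_inf_eq U (Submodule.span ℝ {w₀})
    have h3 := Submodule.finrank_mono hle
    rw [← hkf] at h2
    omega
  obtain ⟨w₁, hw₁W, hw₁⟩ := SetLike.not_le_iff_exists.mp hnotle
  clear hnotle
  obtain ⟨g, hgU', hgw₁⟩ := exists_dual_funct (U ⊔ (Submodule.span ℝ {w₀})) hw₁
  have hgU : ∀ u ∈ U, g u = 0 := fun u hu => hgU' u (Submodule.mem_sup_left hu)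
  have hgw₀ : g w₀ = 0 :=
    hgU' w₀ (Submodule.mem_sup_right (Submodule.mem_span_singleton_self w₀))
  obtain ⟨p₀, hp₀⟩ := hsne
  have hp₀t : p₀ ∈ t := Finset.filter_subset _ t hp₀
  have hfp₀ : f p₀ = M := (Finset.mem_filter.mp hp₀).2
  -- key rotation step, for a functional g' with suitable properties
  have key : ∀ g' : V →ₗ[ℝ] ℝ, (∀ u ∈ U, g' u = 0) → g' w₀ = 0 →
      (∃ q ∈ t, g' p₀ < g' q) → False := by
    intro g hgU hgw₀ ⟨q, hqt, hgq⟩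
    set c := g p₀ with hc
    have hgs : ∀ x ∈ s, g x = c := by
      intro x hx
      have : x - p₀ ∈ U := by
        rw [hU, ← vsub_eq_sub]
        exact vsub_mem_vectorSpan ℝ (Finset.mem_coe.mpr hx) (Finset.mem_coe.mpr hp₀)
      have := hgU _ this
      rw [map_sub] at this
      linarith
    set T := t.filter (fun x => c < g x) with hT
    have hTne : T.Nonempty := ⟨q, Finset.mem_filter.mpr ⟨hqt, hgq⟩⟩
    obtain ⟨x₀, hx₀T, hx₀min⟩ := T.exists_min_image (fun x => (M - f x) / (g x - c)) hTne
    have hx₀t : x₀ ∈ t := (Finset.mem_filter.mp hx₀T).1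
    have hgx₀ : c < g x₀ := (Finset.mem_filter.mp hx₀T).2
    have hfx₀lt : f x₀ < M := by
      rcases lt_or_eq_of_le (Finset.le_sup' f hx₀t : f x₀ ≤ M) with h | h
      · exact h
      · exfalso
        have : x₀ ∈ s := Finset.mem_filter.mpr ⟨hx₀t, h⟩
        have := hgs x₀ this
        linarith
    set τ := (M - f x₀) / (g x₀ - c) with hτ
    have hτpos : 0 < τ := div_pos (by linarith) (by linarith)
    set ff := f + τ • g with hff
    have hffval : ∀ x, ff x = f x + τ * g x := by
      intro x; simp [hff, smul_eq_mul]
    have hfft : ∀ x ∈ t, ff x ≤ M + τ * c := by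
      intro x hx
      rw [hffval]
      by_cases hgx : c < g x
      · have hxT : x ∈ T := Finset.mem_filter.mpr ⟨hx, hgx⟩
        have hmin := hx₀min x hxT
        have hgxc : 0 < g x - c := by linarith
        have : τ ≤ (M - f x) / (g x - c) := hmin
        have := (le_div_iff₀ hgxc).mp this
        linarith
      · push_neg at hgx
        have : f x ≤ M := Finset.le_sup' f hx
        nlinarith
    have hffp₀ : ff p₀ = M + τ * c := by
      rw [hffval, hfp₀, hc]
    have hMff : t.sup' ht ff = M + τ * c := by
      apply le_antisymm
      · exact Finset.sup'_le ht ff hfft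
      · rw [← hffp₀]
        exact Finset.le_sup' ff hp₀t
    set s' := t.filter (fun x => ff x = M + τ * c) with hs'
    have hss' : ∀ x ∈ s, x ∈ s' := by
      intro x hx
      refine Finset.mem_filter.mpr ⟨Finset.filter_subset _ t hx, ?_⟩
      rw [hffval, (Finset.mem_filter.mp hx).2, hgs x hx]
    have hx₀s' : x₀ ∈ s' := by
      refine Finset.mem_filter.mpr ⟨hx₀t, ?_⟩
      rw [hffval]
      have hcan : τ * (g x₀ - c) = M - f x₀ := by
        rw [hτ, div_mul_cancel₀]
        exact sub_ne_zero.mpr (ne_of_gt hgx₀)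
      nlinarith [hcan]
    -- vectorSpan grows
    have hUle : U ≤ vectorSpan ℝ (s' : Set V) := by
      apply vectorSpan_mono
      intro x hx
      exact Finset.mem_coe.mpr (hss' x (Finset.mem_coe.mp hx))
    have hx₀p₀ : x₀ - p₀ ∈ vectorSpan ℝ (s' : Set V) := by
      rw [← vsub_eq_sub]
      exact vsub_mem_vectorSpan ℝ (Finset.mem_coe.mpr hx₀s') (Finset.mem_coe.mpr (hss' p₀ hp₀))
    have hx₀p₀U : x₀ - p₀ ∉ U := by
      intro h
      have := hgU _ h
      rw [map_sub] at this
      rw [hc] at hgx₀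
      linarith
    have hUlt : U < vectorSpan ℝ (s' : Set V) := lt_of_le_of_ne hUle (by
      intro hEq; rw [hEq] at hx₀p₀U; exact hx₀p₀U hx₀p₀)
    have hfrlt : k < finrank ℝ (vectorSpan ℝ (s' : Set V)) := by
      rw [hkf]
      exact Submodule.finrank_lt_finrank_of_lt hUlt
    -- ff is nonconstant on t
    have hffw₀ : ff w₀ ≠ 0 := by
      rw [hffval, hgw₀]
      simpa using hfw₀
    have hffnc : ∃ x ∈ t, ∃ y ∈ t, ff x ≠ ff y := by
      apply exists_ne_on
      intro hle
      exact hffw₀ (hle hw₀W)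
    -- membership of the bigger rank in K
    have hmemK : finrank ℝ (vectorSpan ℝ (s' : Set V)) ∈ K := by
      refine ⟨ff, hffnc, ?_⟩
      have hcoe : ((t.filter (fun x => ff x = t.sup' ht ff)) : Set V) = (s' : Set V) := by
        rw [hs']
        simp only [Finset.coe_filter, hMff]
      rw [hcoe]
    exact absurd (le_csSup hKbdd hmemK) (not_le.mpr hfrlt)
  -- apply key to g or -g
  have hgnc : ∃ x ∈ t, ∃ y ∈ t, g x ≠ g y := by
    apply exists_ne_on
    intro hle
    have := hle hw₁W
    rw [LinearMap.mem_ker] at this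
    rw [this] at hgw₁
    norm_num at hgw₁
  obtain ⟨x₂, hx₂, y₂, hy₂, hgxy⟩ := hgnc
  have : ∃ q ∈ t, g p₀ < g q ∨ g q < g p₀ := by
    rcases Ne.lt_or_gt hgxy with h | h
    · rcases lt_or_ge (g p₀) (g y₂) with h' | h'
      · exact ⟨y₂, hy₂, Or.inl h'⟩
      · exact ⟨x₂, hx₂, Or.inr (lt_of_lt_of_le h h')⟩
    · rcases lt_or_ge (g p₀) (g x₂) with h' | h'
      · exact ⟨x₂, hx₂, Or.inl h'⟩
      · exact ⟨y₂, hy₂, Or.inr (lt_of_lt_of_le h h')⟩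
  obtain ⟨q, hqt, hq⟩ := this
  rcases hq with h | h
  · exact key g hgU hgw₀ ⟨q, hqt, h⟩
  · refine key (-g) (fun u hu => by simp [hgU u hu]) (by simp [hgw₀]) ⟨q, hqt, ?_⟩
    simp only [LinearMap.neg_apply]
    linarith

end Facet

section Pyramid
set_option maxHeartbeats 1000000
open Module

variable {V : Type*} [AddCommGroup V] [Module ℝ V] [FiniteDimensional ℝ V]

lemma finrank_vectorSpan_insert_of_not_mem {S : Set V} (hS : S.Nonempty) {a : V}
    (ha : a ∉ affineSpan ℝ S) :
    finrank ℝ (vectorSpan ℝ (insert a S)) = finrank ℝ (vectorSpan ℝ S) + 1 := by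
  obtain ⟨p₀, hp₀⟩ := hS
  have h1 : (affineSpan ℝ (insert a S)).direction
      = Submodule.span ℝ {a -ᵥ p₀} ⊔ (affineSpan ℝ S).direction := by
    rw [← affineSpan_insert_affineSpan]
    exact AffineSubspace.direction_affineSpan_insert (mem_affineSpan ℝ hp₀)
  have h2 : vectorSpan ℝ (insert a S) = Submodule.span ℝ {a -ᵥ p₀} ⊔ vectorSpan ℝ S := by
    rw [← direction_affineSpan, h1, direction_affineSpan]
  have hv : a -ᵥ p₀ ∉ vectorSpan ℝ S := by
    intro h
    apply ha
    have hp₀' : p₀ ∈ affineSpan ℝ S := mem_affineSpan ℝ hp₀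
    have := AffineSubspace.vadd_mem_of_mem_direction
      (by rw [direction_affineSpan]; exact h) hp₀'
    simpa using this
  have hvne : a -ᵥ p₀ ≠ 0 := by
    intro h; exact hv (h ▸ Submodule.zero_mem _)
  have hdisj : Disjoint (Submodule.span ℝ {a -ᵥ p₀}) (vectorSpan ℝ S) :=
    ((Submodule.disjoint_span_singleton' hvne).mpr hv).symm
  have hfr := Submodule.finrank_sup_add_finrank_inf_eq
    (Submodule.span ℝ {a -ᵥ p₀}) (vectorSpan ℝ S)
  rw [hdisj.eq_bot, finrank_bot, finrank_span_singleton hvne] at hfr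
  rw [h2]
  omega

lemma mem_insert_hull {G : Set V} {a p : V} (hp : p ∈ G)
    {u v : ℝ} (hu : 0 ≤ u) (hv : 0 ≤ v) (huv : u + v = 1) :
    u • a + v • p ∈ convexHull ℝ (insert a G) := by
  have ha' : a ∈ convexHull ℝ (insert a G) := subset_convexHull ℝ _ (Set.mem_insert _ _)
  have hp' : p ∈ convexHull ℝ (insert a G) :=
    subset_convexHull ℝ _ (Set.mem_insert_of_mem _ hp)
  exact (convex_convexHull ℝ _) ha' hp' hu hv huv

/-- Faces of a pyramid: if `G` is a face of the convex set `F` and the apex `a` is outside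
the affine span of `F`, then `conv (insert a G)` is a face of `conv (insert a F)`. -/

lemma pyramid_face {F G : Set V} {a : V} (hF : Convex ℝ F) (hFne : F.Nonempty)
    (hG : IsFaceOf G F) (ha : a ∉ affineSpan ℝ F) :
    IsFaceOf (convexHull ℝ (insert a G)) (convexHull ℝ (insert a F)) := by
  obtain ⟨hGne, hGconv, hGF, hGext⟩ := hG
  refine ⟨⟨a, subset_convexHull ℝ _ (Set.mem_insert _ _)⟩, convex_convexHull ℝ _,
    convexHull_mono (Set.insert_subset_insert hGF), ?_⟩
  intro x hx y hy l hl0 hl1 hmem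
  rw [convexHull_insert hFne, hF.convexHull_eq, mem_convexJoin] at hx hy
  rw [convexHull_insert hGne, hGconv.convexHull_eq, mem_convexJoin] at hmem
  obtain ⟨a₁, ha₁, p, hpF, hxseg⟩ := hx
  obtain ⟨a₂, ha₂, q, hqF, hyseg⟩ := hy
  obtain ⟨a₀, ha₀, g₀, hg₀G, hwseg⟩ := hmem
  rw [Set.mem_singleton_iff] at ha₁ ha₂ ha₀
  rw [ha₁] at hxseg
  rw [ha₂] at hyseg
  rw [ha₀] at hwseg
  obtain ⟨u₁, v₁, hu₁, hv₁, huv₁, hxe⟩ := hxseg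
  obtain ⟨u₂, v₂, hu₂, hv₂, huv₂, hye⟩ := hyseg
  obtain ⟨u₀, v₀, hu₀, hv₀, huv₀, hwe⟩ := hwseg
  set β := l * v₁ + (1 - l) * v₂ with hβ
  have hβ0 : 0 ≤ β := by nlinarith
  rcases eq_or_lt_of_le hβ0 with hβz | hβpos
  · -- β = 0 : x = y = a
    have hv₁0 : v₁ = 0 := by nlinarith
    have hv₂0 : v₂ = 0 := by nlinarith
    have hx' : x = a := by
      rw [← hxe, hv₁0, show u₁ = 1 by linarith]; simp
    have hy' : y = a := by
      rw [← hye, hv₂0, show u₂ = 1 by linarith]; simp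
    rw [hx', hy']
    exact ⟨subset_convexHull ℝ _ (Set.mem_insert _ _),
      subset_convexHull ℝ _ (Set.mem_insert _ _)⟩
  · -- β > 0
    set z := (l * v₁ / β) • p + ((1 - l) * v₂ / β) • q with hz
    have hcoef : l * v₁ / β + (1 - l) * v₂ / β = 1 := by
      field_simp
      linarith
    have hzF : z ∈ F := hF hpF hqF (div_nonneg (mul_nonneg hl0.le hv₁) hβpos.le)
      (div_nonneg (mul_nonneg (by linarith) hv₂) hβpos.le) hcoef
    have hwz : (1 - β) • a + β • z = u₀ • a + v₀ • g₀ := by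
      rw [hwe, ← hxe, ← hye, hz]
      have hβne : β ≠ 0 := ne_of_gt hβpos
      have e1 : β • ((l * v₁ / β) • p) = (l * v₁) • p := by
        rw [smul_smul, mul_div_cancel₀ _ hβne]
      have e2 : β • (((1 - l) * v₂ / β) • q) = ((1 - l) * v₂) • q := by
        rw [smul_smul]
        congr 1
        field_simp
      rw [smul_add, e1, e2]
      have h1β : 1 - β = l * u₁ + (1 - l) * u₂ := by nlinarith [huv₁, huv₂]
      rw [h1β]
      simp only [smul_add, add_smul, smul_smul]
      abel
    -- apex coefficient is unique since a ∉ affineSpan F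
    have hv₀β : v₀ = β := by
      by_contra hne
      apply ha
      have hu₀' : u₀ = 1 - v₀ := by linarith
      have h3 : (β - v₀) • a = β • z - v₀ • g₀ := by
        rw [hu₀'] at hwz
        have h4 : (1 - β) • a + β • z - ((1 - v₀) • a + v₀ • g₀) = 0 := by
          rw [hwz]; abel
        have h5 : (β - v₀) • a - (β • z - v₀ • g₀) =
            -((1 - β) • a + β • z - ((1 - v₀) • a + v₀ • g₀)) := by
          simp only [sub_smul]
          abel
        rw [h4] at h5
        simp only [neg_zero] at h5
        exact sub_eq_zero.mp h5
      set c : ℝ := β / (β - v₀) with hc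
      have hbv : β - v₀ ≠ 0 := sub_ne_zero.mpr (fun h => hne h.symm)
      have ha' : a = c • (z -ᵥ g₀) +ᵥ g₀ := by
        have := congrArg (fun w => (β - v₀)⁻¹ • w) h3
        rw [inv_smul_smul₀ hbv] at this
        rw [this, vsub_eq_sub, vadd_eq_add, hc]
        rw [smul_sub, smul_sub]
        rw [smul_smul, smul_smul]
        have hc2 : (β - v₀)⁻¹ * β = β / (β - v₀) := by ring
        have hc3 : (β - v₀)⁻¹ * v₀ = v₀ / (β - v₀) := by ring
        rw [hc2, hc3]
        have : v₀ / (β - v₀) = β / (β - v₀) - 1 := by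
          field_simp
          ring
        rw [this]
        simp only [sub_smul, one_smul]
        abel
      rw [ha']
      exact AffineSubspace.smul_vsub_vadd_mem _ c (mem_affineSpan ℝ hzF)
        (mem_affineSpan ℝ (hGF hg₀G)) (mem_affineSpan ℝ (hGF hg₀G))
    have hzg : z = g₀ := by
      have hu₀' : u₀ = 1 - β := by linarith
      rw [hu₀', hv₀β] at hwz
      have := add_left_cancel hwz
      exact smul_right_injective V (ne_of_gt hβpos) this
    have hzG : z ∈ G := hzg ▸ hg₀G
    -- now split by positivity of v₁, v₂
    rcases eq_or_lt_of_le hv₁ with hv₁0 | hv₁pos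
    · -- v₁ = 0 : x = a
      have hx' : x = a := by
        rw [← hxe, ← hv₁0, show u₁ = 1 by linarith]; simp
      have hβv : β = (1 - l) * v₂ := by rw [hβ, ← hv₁0]; ring
      have hq' : z = q := by
        have h1 : (1 - l) * v₂ / β = 1 := by
          rw [hβv]; exact div_self (ne_of_gt (hβv ▸ hβpos))
        rw [hz, ← hv₁0, h1]
        simp
      refine ⟨hx' ▸ subset_convexHull ℝ _ (Set.mem_insert _ _), ?_⟩
      rw [← hye]
      exact mem_insert_hull (hq' ▸ hzG) hu₂ hv₂ huv₂
    rcases eq_or_lt_of_le hv₂ with hv₂0 | hv₂pos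
    · have hy' : y = a := by
        rw [← hye, ← hv₂0, show u₂ = 1 by linarith]; simp
      have hβv : β = l * v₁ := by rw [hβ, ← hv₂0]; ring
      have hp' : z = p := by
        have h1 : l * v₁ / β = 1 := by
          rw [hβv]; exact div_self (ne_of_gt (hβv ▸ hβpos))
        rw [hz, ← hv₂0, h1]
        simp
      refine ⟨?_, hy' ▸ subset_convexHull ℝ _ (Set.mem_insert _ _)⟩
      rw [← hxe]
      exact mem_insert_hull (hp' ▸ hzG) hu₁ hv₁ huv₁
    · -- both positive : use that G is a face of F
      set lam := l * v₁ / β with hlam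
      have hlam0 : 0 < lam := div_pos (mul_pos hl0 hv₁pos) hβpos
      have hlam1 : lam < 1 := by
        have h2 : 0 < (1 - l) * v₂ / β := div_pos (mul_pos (by linarith) hv₂pos) hβpos
        linarith [hcoef]
      have hcomb : lam • p + (1 - lam) • q ∈ G := by
        have h1lam : 1 - lam = (1 - l) * v₂ / β := by linarith [hcoef]
        rw [h1lam, hlam]
        exact hz ▸ hzG
      obtain ⟨hpG, hqG⟩ := hGext p hpF q hqF lam hlam0 hlam1 hcomb
      constructor
      · rw [← hxe]; exact mem_insert_hull hpG hu₁ hv₁ huv₁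
      · rw [← hye]; exact mem_insert_hull hqG hu₂ hv₂ huv₂

end Pyramid

section Main
set_option maxHeartbeats 1000000
open Module
open scoped Classical

variable {V : Type*} [AddCommGroup V] [Module ℝ V] [FiniteDimensional ℝ V]

lemma simplex_of_dim_zero (t : Finset V) (P : Set V) (hPt : P = convexHull ℝ (t : Set V))
    (h0 : finrank ℝ (vectorSpan ℝ P) = 0) : IsSimplex P := by
  rcases t.eq_empty_or_nonempty with rfl | ⟨x, hx⟩
  · refine ⟨∅, ?_, by simpa using hPt⟩
    haveI : Subsingleton ↥((∅ : Finset V) : Set V) := by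
      rw [Finset.coe_empty]
      exact (Set.subsingleton_coe _).mpr Set.subsingleton_empty
    exact affineIndependent_of_subsingleton ℝ _
  · have hxP : x ∈ P := hPt ▸ subset_convexHull ℝ _ (Finset.mem_coe.mpr hx)
    have hbot : vectorSpan ℝ P = ⊥ := Submodule.finrank_eq_zero.mp h0
    have hsingle : P = {x} := by
      apply Set.Subset.antisymm
      · intro y hy
        have : y -ᵥ x ∈ vectorSpan ℝ P := vsub_mem_vectorSpan ℝ hy hxP
        rw [hbot, Submodule.mem_bot, vsub_eq_sub, sub_eq_zero] at this
        exact this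
      · simpa using hxP
    refine ⟨{x}, ?_, ?_⟩
    · haveI : Subsingleton ↥(({x} : Finset V) : Set V) := by
        rw [Finset.coe_singleton]
        exact (Set.subsingleton_coe _).mpr Set.subsingleton_singleton
      exact affineIndependent_of_subsingleton ℝ _
    · rw [hsingle, Finset.coe_singleton, convexHull_singleton]

lemma main_aux : ∀ n : ℕ, ∀ (t : Finset V) (P : Set V), P = convexHull ℝ (t : Set V) →
    finrank ℝ (vectorSpan ℝ P) ≤ n →
    (∀ F : Set V, IsMinusFace F P → ∃ a ∈ P, P = convexHull ℝ (F ∪ {a})) →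
    IsSimplex P := by
  intro n
  induction n with
  | zero =>
    intro t P hPt hrank _
    exact simplex_of_dim_zero t P hPt (Nat.le_zero.mp hrank)
  | succ n ih =>
    intro t P hPt hrank hpyr
    rcases Nat.lt_or_ge (finrank ℝ (vectorSpan ℝ P)) (n + 1) with hlt | hge
    · exact ih t P hPt (by omega) hpyr
    have hd : finrank ℝ (vectorSpan ℝ P) = n + 1 := le_antisymm hrank hge
    have htne : t.Nonempty := by
      rcases t.eq_empty_or_nonempty with rfl | h
      · exfalso
        rw [Finset.coe_empty, convexHull_empty] at hPt
        rw [hPt] at hd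
        rw [vectorSpan_empty, finrank_bot] at hd
        omega
      · exact h
    have htne' := htne
    obtain ⟨x₀, hx₀⟩ := htne'
    have hPne : P.Nonempty := ⟨x₀, hPt ▸ subset_convexHull ℝ _ (Finset.mem_coe.mpr hx₀)⟩
    have hPconv : Convex ℝ P := hPt ▸ convex_convexHull ℝ _
    have hvP : vectorSpan ℝ P = vectorSpan ℝ (t : Set V) := by
      rw [hPt, vectorSpan_convexHull]
    -- get a facet
    obtain ⟨s, hs_sub, hsne, hface, hsrank⟩ := exists_facet t htne (by rw [← hvP, hd]; omega)
    set F := convexHull ℝ (s : Set V) with hF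
    have hFface : IsFaceOf F P := by rw [hPt]; exact hface
    have hFconv : Convex ℝ F := convex_convexHull ℝ _
    obtain ⟨y₀, hy₀⟩ := hsne
    have hFne : F.Nonempty := ⟨y₀, subset_convexHull ℝ _ (Finset.mem_coe.mpr hy₀)⟩
    have hFrank : finrank ℝ (vectorSpan ℝ F) = n := by
      rw [hF, vectorSpan_convexHull]
      rw [← hvP, hd] at hsrank
      omega
    have hdimP : setDim P = ((n : ℤ) + 1) := by
      rw [setDim_eq_finrank hPne, hd]; push_cast; ring
    have hdimF : setDim F = (n : ℤ) := by
      rw [setDim_eq_finrank hFne, hFrank]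
    have hminus : IsMinusFace F P := ⟨hFface, by rw [hdimP, hdimF]; ring⟩
    obtain ⟨a, haP, hPa⟩ := hpyr F hminus
    rw [Set.union_singleton] at hPa
    -- F is a proper subset, hence a ∉ affineSpan F
    have hFP : F ≠ P := by
      intro h
      rw [h, hdimP] at hdimF
      omega
    have haF : a ∉ affineSpan ℝ F := by
      intro hmem
      have hsub : P ⊆ (affineSpan ℝ F : Set V) := by
        rw [hPa]
        apply convexHull_min
        · exact Set.insert_subset hmem (subset_affineSpan ℝ F)
        · exact (affineSpan ℝ F).convex
      have hle : vectorSpan ℝ P ≤ vectorSpan ℝ F := by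
        have h1 := vectorSpan_mono ℝ hsub
        rwa [← direction_affineSpan ℝ ((affineSpan ℝ F : Set V)), AffineSubspace.affineSpan_coe,
          direction_affineSpan] at h1
      have := Submodule.finrank_mono hle
      omega
    -- a ∈ F is impossible
    have haFmem : a ∉ F := fun h => haF (mem_affineSpan ℝ h)
    -- F is uniformly pyramidal
    have hFpyr : ∀ G : Set V, IsMinusFace G F → ∃ c ∈ F, F = convexHull ℝ (G ∪ {c}) := by
      intro G hG
      obtain ⟨⟨hGne, hGconv, hGF, hGext⟩, hGdim⟩ := hG
      have hGrank : (finrank ℝ (vectorSpan ℝ G) : ℤ) = (n : ℤ) - 1 := by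
        rw [← setDim_eq_finrank hGne, hGdim, hdimF]
      have hn1 : 1 ≤ n := by
        have h0 : (0 : ℤ) ≤ (finrank ℝ (vectorSpan ℝ G) : ℤ) := Int.natCast_nonneg _
        omega
      have haG : a ∉ affineSpan ℝ G := fun h => haF (affineSpan_mono ℝ hGF h)
      -- the pyramid over G is a face of P
      set F' := convexHull ℝ (insert a G) with hF'
      have hF'face : IsFaceOf F' P := by
        rw [hPa]
        exact pyramid_face hFconv hFne ⟨hGne, hGconv, hGF, hGext⟩ haF
      have hF'ne : F'.Nonempty := ⟨a, subset_convexHull ℝ _ (Set.mem_insert _ _)⟩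
      have hF'rank : finrank ℝ (vectorSpan ℝ F') = n := by
        rw [hF', vectorSpan_convexHull, finrank_vectorSpan_insert_of_not_mem hGne haG]
        omega
      have hF'minus : IsMinusFace F' P := by
        refine ⟨hF'face, ?_⟩
        rw [setDim_eq_finrank hF'ne, hF'rank, hdimP]
        ring
      obtain ⟨b, hbP, hPb⟩ := hpyr F' hF'minus
      rw [Set.union_singleton, hF'] at hPb
      have hPb2 : P = convexHull ℝ (insert b (insert a G)) := by
        rw [hPb, ← Set.union_singleton, convexHull_convexHull_union_left, Set.union_singleton]
      -- P = conv (insert a (insert b G)) as well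
      have hPb3 : P = convexHull ℝ (insert a (insert b G)) := by
        rw [hPb2, Set.insert_comm]
      have hGbne : (insert b G).Nonempty := ⟨b, Set.mem_insert _ _⟩
      have hGbP : convexHull ℝ (insert b G) ⊆ P := by
        apply convexHull_min ?_ hPconv
        apply Set.insert_subset hbP
        exact fun g hg => hFface.2.2.1 (hGF hg)
      -- every x ∈ F lies in conv (insert b G)
      have hFsub : F ⊆ convexHull ℝ (insert b G) := by
        intro x hxF
        have hxP : x ∈ P := hFface.2.2.1 hxF
        rw [hPb3, convexHull_insert hGbne, mem_convexJoin] at hxP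
        obtain ⟨a', ha', r, hr, hseg⟩ := hxP
        rw [Set.mem_singleton_iff] at ha'
        rw [ha'] at hseg
        obtain ⟨u, v, hu, hv, huv, hx⟩ := hseg
        rcases eq_or_lt_of_le hu with hu0 | hupos
        · rw [← hx, ← hu0]
          simpa [show v = 1 by linarith] using hr
        · exfalso
          apply haFmem
          rcases eq_or_lt_of_le (show v ≥ 0 from hv) with hv0 | hvpos
          · have : x = a := by rw [← hx, ← hv0, show u = 1 by linarith]; simp
            exact this ▸ hxF
          · have hrP : r ∈ P := hGbP hr
            have := hFface.2.2.2 a haP r hrP u hupos (by linarith)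
              (by rw [show u • a + (1 - u) • r = x by rw [← hx]; congr 1; rw [show (1:ℝ) - u = v by linarith]]; exact hxF)
            exact this.1
      -- b must lie in F
      have hbF : b ∈ F := by
        by_contra hbF
        have hFG : F ⊆ G := by
          intro x hxF
          have hx' := hFsub hxF
          rw [convexHull_insert hGne, hGconv.convexHull_eq, mem_convexJoin] at hx'
          obtain ⟨b', hb', g, hg, hseg⟩ := hx'
          rw [Set.mem_singleton_iff] at hb'
          rw [hb'] at hseg
          obtain ⟨u, v, hu, hv, huv, hx⟩ := hseg
          rcases eq_or_lt_of_le hu with hu0 | hupos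
          · rw [← hx, ← hu0]
            simpa [show v = 1 by linarith] using hg
          · exfalso
            apply hbF
            rcases eq_or_lt_of_le (show v ≥ 0 from hv) with hv0 | hvpos
            · have : x = b := by rw [← hx, ← hv0, show u = 1 by linarith]; simp
              exact this ▸ hxF
            · have hgP : g ∈ P := hFface.2.2.1 (hGF hg)
              have := hFface.2.2.2 b hbP g hgP u hupos (by linarith)
                (by rw [show u • b + (1 - u) • g = x by rw [← hx]; congr 1; rw [show (1:ℝ) - u = v by linarith]]; exact hxF)
              exact this.1
        have hFGeq : F = G := Set.Subset.antisymm hFG hGF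
        rw [← hFGeq] at hGdim
        rw [hdimF] at hGdim
        omega
      refine ⟨b, hbF, ?_⟩
      apply Set.Subset.antisymm
      · rw [Set.union_singleton]; exact hFsub
      · rw [Set.union_singleton]
        apply convexHull_min ?_ hFconv
        exact Set.insert_subset hbF hGF
    -- induction hypothesis : F is a simplex
    obtain ⟨s', hs'ind, hs'eq⟩ := ih s F hF (by omega) hFpyr
    -- assemble
    have hs'span : affineSpan ℝ ((s' : Set V)) = affineSpan ℝ F := by
      rw [hs'eq, affineSpan_convexHull]
    have has' : a ∉ affineSpan ℝ ((s' : Set V)) := by rw [hs'span]; exact haF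
    have hs'rank : finrank ℝ (vectorSpan ℝ ((s' : Set V))) = n := by
      have : vectorSpan ℝ ((s' : Set V)) = vectorSpan ℝ F := by
        rw [← direction_affineSpan, hs'span, direction_affineSpan]
      rw [this, hFrank]
    have hs'ne : (s' : Set V).Nonempty := by
      rcases s'.eq_empty_or_nonempty with rfl | h
      · exfalso
        rw [Finset.coe_empty, convexHull_empty] at hs'eq
        exact (hs'eq ▸ hFne).elim (fun x hx => hx)
      · exact ⟨h.choose, Finset.mem_coe.mpr h.choose_spec⟩
    -- P is the hull of insert a s'
    have hPfin : P = convexHull ℝ ((insert a s' : Finset V) : Set V) := by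
      rw [Finset.coe_insert, hPa, hs'eq, ← Set.union_singleton,
        convexHull_convexHull_union_left, Set.union_singleton]
    -- the set insert a s' is affinely independent via cardinality
    set T : Set V := insert a (s' : Set V) with hT
    have hTne : T.Nonempty := ⟨a, Set.mem_insert _ _⟩
    have hTrank : finrank ℝ (vectorSpan ℝ T) = n + 1 := by
      rw [hT, finrank_vectorSpan_insert_of_not_mem hs'ne has', hs'rank]
    obtain ⟨u, hu_sub, hu_span, hu_ind, hu_card⟩ := exists_affineIndependent_card hTne
    rw [hTrank] at hu_card
    -- s' has n + 1 elements
    have hs'card : s'.card = n + 1 := by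
      haveI : Nonempty ↥((s' : Set V)) := hs'ne.to_subtype
      have hcard : Fintype.card ↥((s' : Set V)) = (Fintype.card ↥((s' : Set V)) - 1) + 1 :=
        (Nat.succ_pred_eq_of_pos Fintype.card_pos).symm
      have hfr := hs'ind.finrank_vectorSpan hcard
      rw [Subtype.range_coe, hs'rank] at hfr
      have hc2 : Fintype.card ↥((s' : Set V)) = s'.card :=
        (Fintype.card_congr (Equiv.subtypeEquivRight (fun x => Finset.mem_coe))).trans
          (Fintype.card_coe s')
      omega
    have has'2 : a ∉ s' := fun h => has' (mem_affineSpan ℝ (Finset.mem_coe.mpr h))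
    have hTcard : T.ncard = n + 2 := by
      rw [hT, ← Finset.coe_insert, Set.ncard_coe_finset, Finset.card_insert_of_notMem has'2,
        hs'card]
    have huT : (u : Set V) = T := by
      refine Set.eq_of_subset_of_ncard_le hu_sub ?_ ?_
      · rw [hTcard, Set.ncard_coe_finset]
        omega
      · rw [hT, ← Finset.coe_insert]
        exact (insert a s').finite_toSet

    have huT2 : (u : Set V) = ((insert a s' : Finset V) : Set V) := by
      rw [huT, hT, Finset.coe_insert]
    refine ⟨insert a s', ?_, hPfin⟩
    rw [← huT2]
    exact hu_ind

end Main


/-- Every uniformly pyramidal polytope is a simplex. -/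
theorem uniformly_pyramidal_polytope_is_simplex {V : Type*} [AddCommGroup V] [Module ℝ V]
    [FiniteDimensional ℝ V] (P : Set V) (hP : IsPolytope P)
    (hpyr : ∀ F : Set V, IsMinusFace F P → ∃ a ∈ P, P = convexHull ℝ (F ∪ {a})) :
    IsSimplex P := by
  obtain ⟨t, hPt⟩ := hP
  exact main_aux (Module.finrank ℝ (vectorSpan ℝ P)) t P hPt le_rfl hpyr
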